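/- For every u > 0 and v > 0, the functions g₁ and g₂ are differentiable at (u,v) and the determinant of the Jacobian matrix of the map (u,v) ↦ (g₁(u,v), g₂(u,v)), i.e. J(g₁,g₂)(u,v) = (∂g₁/∂u)(∂g₂/∂v) − (∂g₁/∂v)(∂g₂/∂u), is nonzero. -/

import Mathlib

open MeasureTheory Real

/-- The standard normal probability density function φ. -/
noncomputable def stdPhi (x : ℝ) : ℝ := Real.exp (-x ^ 2 / 2) / Real.sqrt (2 * Real.pi)

/-- The standard normal cumulative distribution function Φ. -/
noncomputable def stdCDF (x : ℝ) : ℝ := ∫ u in Set.Iic x, stdPhi u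

/-- The stationary first moment g₁(u,v) = u + (u/v)·φ(v)/(1 − Φ(−v)). -/
noncomputable def g1 (u v : ℝ) : ℝ := u + (u / v) * stdPhi v / (1 - stdCDF (-v))

/-- The stationary second moment
g₂(u,v) = u²/v² + u² + (u²/v)·φ(v)/(1 − Φ(−v)). -/
noncomputable def g2 (u v : ℝ) : ℝ :=
  u ^ 2 / v ^ 2 + u ^ 2 + (u ^ 2 / v) * stdPhi v / (1 - stdCDF (-v))

/-! Since `1 - Φ(-v) = Φ(v)`, the moments factor as `g₁ = u·A(v)` and
`g₂ = u²·(A(v) + 1/v²)` with `A = 1 + r/v` (`meanFactor`) and `r = φ/Φ` (`stdRatio`), which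
satisfies `r' = -r(v + r)`. Substituting, the Jacobian is `-u²·q(v, r)/v³` with
`q(v, r) = 2 - (3v + v³)r - (3 + 2v²)r² - vr³`. For `v ≥ 0`, `q` decreases in `r > 0`, and `r`
is bounded above through `Φ(v) ≥ 1/2 + vφ(v)` and a Taylor lower bound for `exp (v²/2)`; what
remains is a polynomial inequality in `v`. -/

open ProbabilityTheory

lemma stdPhi_eq_gaussianPDFReal : stdPhi = gaussianPDFReal 0 1 := by
  ext x
  simp [stdPhi, gaussianPDFReal, div_eq_inv_mul]

lemma stdPhi_pos (x : ℝ) : 0 < stdPhi x := by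
  rw [stdPhi_eq_gaussianPDFReal]; exact gaussianPDFReal_pos _ _ _ one_ne_zero

lemma integrable_stdPhi : Integrable stdPhi := by
  rw [stdPhi_eq_gaussianPDFReal]; exact integrable_gaussianPDFReal _ _

lemma continuous_stdPhi : Continuous stdPhi := by
  unfold stdPhi; fun_prop

lemma stdPhi_neg (x : ℝ) : stdPhi (-x) = stdPhi x := by simp [stdPhi]

lemma hasDerivAt_stdPhi (x : ℝ) : HasDerivAt stdPhi (-x * stdPhi x) x := by
  refine ((((hasDerivAt_pow 2 x).neg.div_const 2).exp).div_const (√(2 * π))).congr_deriv ?_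
  simp only [stdPhi, Pi.neg_apply]
  push_cast
  ring

lemma stdCDF_neg (x : ℝ) : stdCDF (-x) = 1 - stdCDF x := by
  have hsplit := intervalIntegral.integral_Iic_add_Ioi (b := x) integrable_stdPhi.integrableOn
    integrable_stdPhi.integrableOn
  have hreflect : stdCDF (-x) = ∫ t in Set.Ioi x, stdPhi t := by
    rw [stdCDF, ← integral_comp_neg_Ioi]; simp_rw [stdPhi_neg]
  have htotal : ∫ t, stdPhi t = 1 := by
    rw [stdPhi_eq_gaussianPDFReal]; exact integral_gaussianPDFReal_eq_one 0 one_ne_zero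
  rw [hreflect, stdCDF]; linarith

lemma stdCDF_sub_stdCDF (a b : ℝ) : stdCDF b - stdCDF a = ∫ t in a..b, stdPhi t :=
  intervalIntegral.integral_Iic_sub_Iic integrable_stdPhi.integrableOn
    integrable_stdPhi.integrableOn

lemma hasDerivAt_stdCDF (x : ℝ) : HasDerivAt stdCDF (stdPhi x) x := by
  have h := (intervalIntegral.integral_hasDerivAt_right (a := 0) (b := x)
    integrable_stdPhi.intervalIntegrable
    (continuous_stdPhi.stronglyMeasurable.stronglyMeasurableAtFilter)
    continuous_stdPhi.continuousAt).const_add (stdCDF 0)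
  have hCDF : stdCDF = fun y => stdCDF 0 + ∫ t in (0:ℝ)..y, stdPhi t := by
    ext y; rw [← stdCDF_sub_stdCDF]; ring
  rwa [hCDF]

lemma stdCDF_zero : stdCDF 0 = 1 / 2 := by
  linarith [neg_zero (G := ℝ) ▸ stdCDF_neg 0]

lemma stdCDF_pos (x : ℝ) : 0 < stdCDF x := by
  have hnonneg : 0 ≤ stdCDF (x - 1) :=
    setIntegral_nonneg measurableSet_Iic fun t _ => (stdPhi_pos t).le
  have hpos : 0 < ∫ t in (x - 1)..x, stdPhi t :=
    intervalIntegral.intervalIntegral_pos_of_pos_on integrable_stdPhi.intervalIntegrable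
      (fun t _ => stdPhi_pos t) (by linarith)
  linarith [stdCDF_sub_stdCDF (x - 1) x]

lemma one_half_add_mul_stdPhi_le_stdCDF {x : ℝ} (hx : 0 ≤ x) :
    1 / 2 + x * stdPhi x ≤ stdCDF x := by
  have hmono : ∫ t in (0:ℝ)..x, stdPhi x ≤ ∫ t in (0:ℝ)..x, stdPhi t :=
    intervalIntegral.integral_mono_on hx (by simp) integrable_stdPhi.intervalIntegrable
      fun t ht => by
        unfold stdPhi
        gcongr <;> linarith [ht.1, ht.2]
  rw [intervalIntegral.integral_const, smul_eq_mul, sub_zero, ← stdCDF_sub_stdCDF,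
    stdCDF_zero] at hmono
  linarith

noncomputable def stdRatio (x : ℝ) : ℝ := stdPhi x / stdCDF x

lemma stdRatio_pos (x : ℝ) : 0 < stdRatio x := div_pos (stdPhi_pos x) (stdCDF_pos x)

lemma hasDerivAt_stdRatio (x : ℝ) :
    HasDerivAt stdRatio (-stdRatio x * (x + stdRatio x)) x := by
  refine ((hasDerivAt_stdPhi x).div (hasDerivAt_stdCDF x) (stdCDF_pos x).ne').congr_deriv ?_
  have := (stdCDF_pos x).ne'
  simp only [stdRatio]
  field_simp
  ring

/-- `√(π/2)`, rounded down, times the cubic Taylor polynomial of `exp (v²/2)`, plus `v`: a lower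
bound for `Φ(v)/φ(v) ≥ √(π/2)·exp (v²/2) + v`. -/
noncomputable def millsBound (v : ℝ) : ℝ :=
  12533 / 10000 * (1 + v ^ 2 / 2 + v ^ 4 / 8 + v ^ 6 / 48) + v

lemma millsBound_pos {v : ℝ} (hv : 0 ≤ v) : 0 < millsBound v := by
  unfold millsBound; positivity

lemma millsBound_le_stdCDF_div_stdPhi {v : ℝ} (hv : 0 ≤ v) :
    millsBound v ≤ stdCDF v / stdPhi v := by
  have hsqrt : 12533 / 10000 ≤ √(2 * π) / 2 := by
    rw [le_div_iff₀ two_pos, Real.le_sqrt (by norm_num) (by positivity)]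
    nlinarith [Real.pi_gt_d6]
  have hexp : 1 + v ^ 2 / 2 + v ^ 4 / 8 + v ^ 6 / 48 ≤ rexp (v ^ 2 / 2) := by
    have h := Real.sum_le_exp_of_nonneg (x := v ^ 2 / 2) (by positivity) 4
    norm_num [Finset.sum_range_succ, Nat.factorial] at h
    linarith
  have hinv : 1 / (2 * stdPhi v) = √(2 * π) / 2 * rexp (v ^ 2 / 2) := by
    rw [stdPhi, neg_div, Real.exp_neg]; field_simp
  have hphi := stdPhi_pos v
  calc millsBound v ≤ 1 / (2 * stdPhi v) + v := by
        rw [hinv, millsBound]; gcongr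
    _ ≤ stdCDF v / stdPhi v := by
        rw [le_div_iff₀ hphi]
        have := one_half_add_mul_stdPhi_le_stdCDF hv
        field_simp
        linarith

lemma millsBound_cubic_pos {v : ℝ} (hv : 0 ≤ v) :
    0 < 2 * millsBound v ^ 3 - (3 * v + v ^ 3) * millsBound v ^ 2
      - (3 + 2 * v ^ 2) * millsBound v - v := by
  unfold millsBound
  nlinarith [hv, pow_nonneg hv 2, pow_nonneg hv 3, pow_nonneg hv 4, pow_nonneg hv 6,
    pow_nonneg hv 8, pow_nonneg hv 10, pow_nonneg hv 12, pow_nonneg hv 14, pow_nonneg hv 16,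
    pow_nonneg hv 18]

lemma cubic_stdRatio_pos {v : ℝ} (hv : 0 ≤ v) :
    0 < 2 - (3 * v + v ^ 3) * stdRatio v - (3 + 2 * v ^ 2) * stdRatio v ^ 2
      - v * stdRatio v ^ 3 := by
  set r := stdRatio v
  set B := millsBound v
  have hB : 0 < B := millsBound_pos hv
  have hr : 0 < r := stdRatio_pos v
  have hrB : r ≤ B⁻¹ := by
    rw [show r = (stdCDF v / stdPhi v)⁻¹ from (inv_div _ _).symm]
    exact inv_anti₀ hB (millsBound_le_stdCDF_div_stdPhi hv)
  calc 0 < (2 * B ^ 3 - (3 * v + v ^ 3) * B ^ 2 - (3 + 2 * v ^ 2) * B - v) * (B⁻¹) ^ 3 :=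
        mul_pos (millsBound_cubic_pos hv) (by positivity)
    _ = 2 - (3 * v + v ^ 3) * B⁻¹ - (3 + 2 * v ^ 2) * (B⁻¹) ^ 2 - v * (B⁻¹) ^ 3 := by
        field_simp
    _ ≤ 2 - (3 * v + v ^ 3) * r - (3 + 2 * v ^ 2) * r ^ 2 - v * r ^ 3 := by
        gcongr

noncomputable def meanFactor (v : ℝ) : ℝ := 1 + stdRatio v / v

lemma hasDerivAt_meanFactor {v : ℝ} (hv : v ≠ 0) :
    HasDerivAt meanFactor (-stdRatio v * (v + stdRatio v) / v - stdRatio v / v ^ 2) v := by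
  refine (((hasDerivAt_stdRatio v).div (hasDerivAt_id v) hv).const_add 1).congr_deriv ?_
  simp only [id]
  field_simp

lemma g1_eq (u v : ℝ) : g1 u v = u * meanFactor v := by
  rw [g1, stdCDF_neg, sub_sub_cancel, meanFactor, stdRatio]; ring

lemma g2_eq (u v : ℝ) : g2 u v = u ^ 2 * (meanFactor v + 1 / v ^ 2) := by
  rw [g2, stdCDF_neg, sub_sub_cancel, meanFactor, stdRatio]; ring

lemma jacobian_eq (u v r : ℝ) (hv : v ≠ 0) :
    (1 + r / v) * (u ^ 2 * ((-r * (v + r) / v - r / v ^ 2) - 2 / v ^ 3))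
      - u * (-r * (v + r) / v - r / v ^ 2) * (2 * u * (1 + r / v + 1 / v ^ 2))
      = -u ^ 2 * (2 - (3 * v + v ^ 3) * r - (3 + 2 * v ^ 2) * r ^ 2 - v * r ^ 3) / v ^ 3 := by
  field_simp
  ring

lemma hasDerivAt_inv_sq {v : ℝ} (hv : v ≠ 0) :
    HasDerivAt (fun v' : ℝ => 1 / v' ^ 2) (-2 / v ^ 3) v := by
  simp only [one_div]
  exact ((hasDerivAt_pow 2 v).inv (pow_ne_zero 2 hv)).congr_deriv (by field_simp; ring)

lemma hasDerivAt_g1_fst (u v : ℝ) : HasDerivAt (fun u' => g1 u' v) (meanFactor v) u := by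
  simpa only [g1_eq] using hasDerivAt_mul_const (meanFactor v)

lemma hasDerivAt_g2_fst (u v : ℝ) :
    HasDerivAt (fun u' => g2 u' v) (2 * u * (meanFactor v + 1 / v ^ 2)) u := by
  simp only [g2_eq]
  exact ((hasDerivAt_pow 2 u).mul_const _).congr_deriv (by ring)

lemma hasDerivAt_g1_snd (u : ℝ) {v : ℝ} (hv : v ≠ 0) :
    HasDerivAt (fun v' => g1 u v')
      (u * (-stdRatio v * (v + stdRatio v) / v - stdRatio v / v ^ 2)) v := by
  simpa only [g1_eq] using (hasDerivAt_meanFactor hv).const_mul u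

lemma hasDerivAt_g2_snd (u : ℝ) {v : ℝ} (hv : v ≠ 0) :
    HasDerivAt (fun v' => g2 u v')
      (u ^ 2 * (-stdRatio v * (v + stdRatio v) / v - stdRatio v / v ^ 2 - 2 / v ^ 3)) v := by
  simp only [g2_eq]
  exact (((hasDerivAt_meanFactor hv).add (hasDerivAt_inv_sq hv)).const_mul _).congr_deriv
    (by ring)

lemma differentiableAt_g1 (u : ℝ) {v : ℝ} (hv : v ≠ 0) :
    DifferentiableAt ℝ (fun p : ℝ × ℝ => g1 p.1 p.2) (u, v) := by
  simp only [g1_eq]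
  exact differentiableAt_fst.mul ((hasDerivAt_meanFactor hv).differentiableAt.comp
    (f := Prod.snd) (u, v) differentiableAt_snd)

lemma differentiableAt_g2 (u : ℝ) {v : ℝ} (hv : v ≠ 0) :
    DifferentiableAt ℝ (fun p : ℝ × ℝ => g2 p.1 p.2) (u, v) := by
  simp only [g2_eq]
  exact (differentiableAt_fst.pow 2).mul
    (((hasDerivAt_meanFactor hv).add (hasDerivAt_inv_sq hv)).differentiableAt.comp
      (f := Prod.snd) (u, v) differentiableAt_snd)

/-- For every u > 0 and v > 0, the functions g₁ and g₂ are differentiable at (u,v) and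
the determinant of the Jacobian of (u,v) ↦ (g₁(u,v), g₂(u,v)),
J(g₁,g₂) = (∂g₁/∂u)(∂g₂/∂v) − (∂g₁/∂v)(∂g₂/∂u), is nonzero. -/
theorem jacobian_g1_g2_ne_zero (u v : ℝ) (hu : 0 < u) (hv : 0 < v) :
    DifferentiableAt ℝ (fun p : ℝ × ℝ => g1 p.1 p.2) (u, v) ∧
    DifferentiableAt ℝ (fun p : ℝ × ℝ => g2 p.1 p.2) (u, v) ∧
    deriv (fun u' => g1 u' v) u * deriv (fun v' => g2 u v') v -
        deriv (fun v' => g1 u v') v * deriv (fun u' => g2 u' v) u ≠ 0 := by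
  refine ⟨differentiableAt_g1 u hv.ne', differentiableAt_g2 u hv.ne', ?_⟩
  rw [(hasDerivAt_g1_fst u v).deriv, (hasDerivAt_g2_snd u hv.ne').deriv,
    (hasDerivAt_g1_snd u hv.ne').deriv, (hasDerivAt_g2_fst u v).deriv, meanFactor,
    jacobian_eq u v _ hv.ne']
  exact div_ne_zero (mul_ne_zero (neg_ne_zero.2 (pow_ne_zero 2 hu.ne'))
    (cubic_stdRatio_pos hv.le).ne') (pow_ne_zero 3 hv.ne')
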